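/- arXiv:1109.6391 — 2 statements merged into one kernel-verified Lean document; each statement's English description precedes it below -/
import Mathlib

section
/- (Mass conservation) Consider the iteration on a directed graph G=(V,E): z_j[k+1] = Σ_{(j,i)∈E} (τ_{ji}[k] - τ_{ji}[k-1]), where σ_{ji}[k] = σ_{ji}[k-1] + z_i[k]/D_i^+ for (j,i)∈E, τ_{ji}[k] = σ_{ji}[k] if x_{ji}[k]=1 and τ_{ji}[k] = τ_{ji}[k-1] if x_{ji}[k]=0, with σ_{ji}[-1]=τ_{ji}[-1]=0 and x_{ji}[k] ∈ {0,1} arbitrary. Define M_{k+1} := Σ_j z_j[k+1] + Σ_{(j,i)∈E} (σ_{ji}[k] - τ_{ji}[k-1])(1 - x_{ji}[k]). Then M_{k+1} = Σ_j z_j[0] for all k ≥ 0. -/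
/-!
Every link `(j,i)` holds the mass `σ_{ji} - τ_{ji}` that node `i` has sent on it but that has not yet
been delivered to `j`. The potential "mass at the nodes plus mass on the links" is invariant: in one
step node `i` pushes `z_i / D_i` onto each of its `D_i` outgoing links, and node `j` absorbs exactly
the increments `τ_{ji}[k] - τ_{ji}[k-1]` that leave its incoming links. The quantity `M_{k+1}` is this
potential, since the mass on a link is `σ_{ji}[k] - τ_{ji}[k] = (σ_{ji}[k] - τ_{ji}[k-1])(1 - x_{ji}[k])`.
-/

open Finset

section LinkSum

variable {ι M : Type*} [Fintype ι] (Adj : ι → ι → Prop) [DecidableRel Adj]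

def linkSum [AddCommMonoid M] (g : ι → ι → M) : M :=
  ∑ j, ∑ i, if Adj j i then g j i else 0

variable {Adj}

theorem linkSum_congr [AddCommMonoid M] {g g' : ι → ι → M}
    (h : ∀ j i, Adj j i → g j i = g' j i) : linkSum Adj g = linkSum Adj g' :=
  sum_congr rfl fun j _ => sum_congr rfl fun i _ => by split_ifs with hji <;> simp [h j i, hji]

theorem linkSum_add [AddCommMonoid M] (g g' : ι → ι → M) :
    linkSum Adj (fun j i => g j i + g' j i) = linkSum Adj g + linkSum Adj g' := by
  simp only [linkSum, ← sum_add_distrib, ite_add_ite, add_zero]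

theorem linkSum_sub [AddCommGroup M] (g g' : ι → ι → M) :
    linkSum Adj (fun j i => g j i - g' j i) = linkSum Adj g - linkSum Adj g' := by
  simp only [linkSum, ← sum_sub_distrib, ite_sub_ite, sub_zero]

theorem linkSum_div_inDegree (hin : ∀ i, ∃ j, Adj j i) (f : ι → ℝ) :
    linkSum Adj (fun _ i => f i / (univ.filter fun l => Adj l i).card) = ∑ i, f i := by
  rw [linkSum, sum_comm]
  refine sum_congr rfl fun i _ => ?_
  obtain ⟨j, hj⟩ := hin i
  have hcard : ((univ.filter fun l => Adj l i).card : ℝ) ≠ 0 :=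
    Nat.cast_ne_zero.mpr (card_ne_zero_of_mem (mem_filter.mpr ⟨mem_univ j, hj⟩))
  rw [← sum_filter, sum_const, nsmul_eq_mul, mul_div_cancel₀ _ hcard]

end LinkSum

theorem sum_add_linkSum_sub_eq_of_step {ι : Type*} [Fintype ι] {Adj : ι → ι → Prop}
    [DecidableRel Adj] (hin : ∀ i, ∃ j, Adj j i) {z z' : ι → ℝ} {sig sig' tau tau' : ι → ι → ℝ}
    (hsig : ∀ j i, Adj j i → sig' j i = sig j i + z i / (univ.filter fun l => Adj l i).card)
    (hz : ∀ j, z' j = ∑ i, if Adj j i then tau' j i - tau j i else 0) :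
    ∑ j, z' j + linkSum Adj (fun j i => sig' j i - tau' j i)
      = ∑ j, z j + linkSum Adj (fun j i => sig j i - tau j i) := by
  have hdelivered : ∑ j, z' j = linkSum Adj (fun j i => tau' j i - tau j i) :=
    sum_congr rfl fun j _ => hz j
  have hsent : linkSum Adj (fun j i => sig' j i - tau j i)
      = linkSum Adj (fun j i => sig j i - tau j i) + ∑ i, z i := by
    rw [← linkSum_div_inDegree hin z, ← linkSum_add]
    exact linkSum_congr fun j i h => by rw [hsig j i h]; ring
  rw [hdelivered, ← linkSum_add, add_comm (∑ j, z j), ← hsent]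
  exact linkSum_congr fun j i _ => by ring

/-- Mass conservation for the robust broadcast iteration.  Here `sig k` and `tau k`
represent `σ[k-1]` and `τ[k-1]` (so that `sig 0 = tau 0 = 0` encode the initial
conditions `σ[-1] = τ[-1] = 0`), `z k` is the state at time `k`, `x k j i` is the
link-activation indicator of link `(j,i)` at time `k`, and `D i` is the out-degree
of node `i`. -/
theorem stmt_17 {n : ℕ} (Adj : Fin n → Fin n → Prop) [DecidableRel Adj]
    (hself : ∀ j, Adj j j)
    (D : Fin n → ℕ) (hD : ∀ i, D i = (univ.filter fun l => Adj l i).card)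
    (x : ℕ → Fin n → Fin n → Bool)
    (z : ℕ → Fin n → ℝ) (sig tau : ℕ → Fin n → Fin n → ℝ)
    (hsig0 : ∀ j i, sig 0 j i = 0) (htau0 : ∀ j i, tau 0 j i = 0)
    (hsig : ∀ k j i, Adj j i → sig (k + 1) j i = sig k j i + z k i / (D i))
    (htau : ∀ k j i, Adj j i →
      tau (k + 1) j i = if x k j i then sig (k + 1) j i else tau k j i)
    (hz : ∀ k j, z (k + 1) j = ∑ i, if Adj j i then tau (k + 1) j i - tau k j i else 0) :
    ∀ k, (∑ j, z (k + 1) j)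
        + (∑ j, ∑ i, if Adj j i then
            (if x k j i then 0 else sig (k + 1) j i - tau k j i) else 0)
      = ∑ j, z 0 j := by
  obtain rfl : D = fun i => (univ.filter fun l => Adj l i).card := funext hD
  have hin : ∀ i, ∃ j, Adj j i := fun i => ⟨i, hself i⟩
  let potential k := ∑ j, z k j + linkSum Adj (fun j i => sig k j i - tau k j i)
  have hstep k : potential (k + 1) = potential k :=
    sum_add_linkSum_sub_eq_of_step hin (hsig k) (hz k)
  have hconst k : potential k = ∑ j, z 0 j := by
    induction k with
    | zero => simp [potential, linkSum, hsig0, htau0]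
    | succ k ih => rw [hstep, ih]
  intro k
  rw [← hconst (k + 1)]
  refine congrArg _ (linkSum_congr fun j i h => ?_)
  rw [htau k j i h]
  split <;> ring
end

section
/- (Nonnegativity of states) With the iteration of the previous mass-conservation statement and z_j[0] ≥ 0 for all j, one has z_j[k] ≥ 0, σ_{ji}[k] ≥ τ_{ji}[k-1] ≥ 0, and the pending mass (σ_{ji}[k] - τ_{ji}[k-1])(1-x_{ji}[k]) ≥ 0, for all j, all (j,i) ∈ E, and all k ≥ 0. -/
open Finset

/-!
Along each link the latch `τ[k] = x[k] ? σ[k] : τ[k-1]` moves `τ` up to `σ` or leaves it,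
so `τ[k-1] ≤ σ[k]` gives `τ[k-1] ≤ τ[k] ≤ σ[k]`. Hence every increment `τ[k] - τ[k-1]` is
nonnegative, so is `z[k+1]`, and then `σ[k+1] = σ[k] + z[k+1]/D ≥ σ[k] ≥ τ[k]` restores the
invariant one step later.
-/

section Latch

variable {α : Type*} [Preorder α] {a s : α} (p : Prop) [Decidable p]

theorem le_ite_self_of_le (h : a ≤ s) : a ≤ if p then s else a := by
  split_ifs
  exacts [h, le_rfl]

theorem ite_self_le_of_le (h : a ≤ s) : (if p then s else a) ≤ s := by
  split_ifs
  exacts [le_rfl, h]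

end Latch

namespace RobustBroadcast

variable {n : ℕ} {Adj : Fin n → Fin n → Prop} {D : Fin n → ℕ}
  {x : ℕ → Fin n → Fin n → Bool} {z : ℕ → Fin n → ℝ} {sig tau : ℕ → Fin n → Fin n → ℝ}

theorem sig_le_sig_succ
    (hsig : ∀ k j i, Adj j i → sig (k + 1) j i = sig k j i + z k i / (D i))
    {k : ℕ} (hzk : ∀ j, 0 ≤ z k j) {j i : Fin n} (hji : Adj j i) :
    sig k j i ≤ sig (k + 1) j i := by
  rw [hsig k j i hji]
  exact le_add_of_nonneg_right (div_nonneg (hzk i) (Nat.cast_nonneg _))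

theorem z_succ_nonneg [DecidableRel Adj]
    (htau : ∀ k j i, Adj j i →
      tau (k + 1) j i = if x k j i then sig (k + 1) j i else tau k j i)
    (hz : ∀ k j, z (k + 1) j = ∑ i, if Adj j i then tau (k + 1) j i - tau k j i else 0)
    {k : ℕ} (hlatch : ∀ j i, Adj j i → tau k j i ≤ sig (k + 1) j i) (j : Fin n) :
    0 ≤ z (k + 1) j := by
  rw [hz]
  refine sum_nonneg fun i _ => ?_
  split_ifs with hji
  · rw [htau k j i hji, sub_nonneg]
    exact le_ite_self_of_le _ (hlatch j i hji)
  · exact le_rfl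

theorem nonneg_invariant [DecidableRel Adj]
    (hsig0 : ∀ j i, sig 0 j i = 0) (htau0 : ∀ j i, tau 0 j i = 0)
    (hsig : ∀ k j i, Adj j i → sig (k + 1) j i = sig k j i + z k i / (D i))
    (htau : ∀ k j i, Adj j i →
      tau (k + 1) j i = if x k j i then sig (k + 1) j i else tau k j i)
    (hz : ∀ k j, z (k + 1) j = ∑ i, if Adj j i then tau (k + 1) j i - tau k j i else 0)
    (hz0 : ∀ j, 0 ≤ z 0 j) (k : ℕ) :
    (∀ j, 0 ≤ z k j) ∧ ∀ j i, Adj j i → 0 ≤ tau k j i ∧ tau k j i ≤ sig (k + 1) j i := by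
  induction k with
  | zero =>
    refine ⟨hz0, fun j i hji => ⟨(htau0 j i).ge, ?_⟩⟩
    rw [htau0, ← hsig0 j i]
    exact sig_le_sig_succ hsig hz0 hji
  | succ k ih =>
    have hlatch j i (hji : Adj j i) := (ih.2 j i hji).2
    have hzk1 := z_succ_nonneg htau hz hlatch
    refine ⟨hzk1, fun j i hji => ?_⟩
    rw [htau k j i hji]
    exact ⟨(ih.2 j i hji).1.trans (le_ite_self_of_le _ (hlatch j i hji)),
      (ite_self_le_of_le _ (hlatch j i hji)).trans (sig_le_sig_succ hsig hzk1 hji)⟩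

end RobustBroadcast

/-- Here `sig k` and `tau k` represent `σ[k-1]` and `τ[k-1]`, so `sig 0 = tau 0 = 0` encode
the initial conditions `σ[-1] = τ[-1] = 0`. -/
theorem stmt_18_general {n : ℕ} (Adj : Fin n → Fin n → Prop) [DecidableRel Adj]
    (D : Fin n → ℕ)
    (x : ℕ → Fin n → Fin n → Bool)
    (z : ℕ → Fin n → ℝ) (sig tau : ℕ → Fin n → Fin n → ℝ)
    (hsig0 : ∀ j i, sig 0 j i = 0) (htau0 : ∀ j i, tau 0 j i = 0)
    (hsig : ∀ k j i, Adj j i → sig (k + 1) j i = sig k j i + z k i / (D i))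
    (htau : ∀ k j i, Adj j i →
      tau (k + 1) j i = if x k j i then sig (k + 1) j i else tau k j i)
    (hz : ∀ k j, z (k + 1) j = ∑ i, if Adj j i then tau (k + 1) j i - tau k j i else 0)
    (hz0 : ∀ j, 0 ≤ z 0 j) :
    (∀ k j, 0 ≤ z k j) ∧
    (∀ k j i, Adj j i → 0 ≤ tau k j i) ∧
    (∀ k j i, Adj j i → tau k j i ≤ sig (k + 1) j i) ∧
    (∀ k j i, Adj j i →
      0 ≤ (if x k j i then 0 else sig (k + 1) j i - tau k j i)) := by
  have inv := RobustBroadcast.nonneg_invariant hsig0 htau0 hsig htau hz hz0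
  refine ⟨fun k => (inv k).1, fun k j i h => ((inv k).2 j i h).1,
    fun k j i h => ((inv k).2 j i h).2, fun k j i h => ?_⟩
  split_ifs
  exacts [le_rfl, sub_nonneg.mpr ((inv k).2 j i h).2]

/-- Nonnegativity of states for the robust broadcast iteration.  Here `sig k` and `tau k`
represent `σ[k-1]` and `τ[k-1]` (so that `sig 0 = tau 0 = 0` encode the initial
conditions `σ[-1] = τ[-1] = 0`), `z k` is the state at time `k`, `x k j i` is the
link-activation indicator of link `(j,i)` at time `k`, and `D i` is the out-degree
of node `i`. -/
theorem stmt_18 {n : ℕ} (Adj : Fin n → Fin n → Prop) [DecidableRel Adj]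
    (hself : ∀ j, Adj j j)
    (D : Fin n → ℕ) (hD : ∀ i, D i = (univ.filter fun l => Adj l i).card)
    (x : ℕ → Fin n → Fin n → Bool)
    (z : ℕ → Fin n → ℝ) (sig tau : ℕ → Fin n → Fin n → ℝ)
    (hsig0 : ∀ j i, sig 0 j i = 0) (htau0 : ∀ j i, tau 0 j i = 0)
    (hsig : ∀ k j i, Adj j i → sig (k + 1) j i = sig k j i + z k i / (D i))
    (htau : ∀ k j i, Adj j i →
      tau (k + 1) j i = if x k j i then sig (k + 1) j i else tau k j i)
    (hz : ∀ k j, z (k + 1) j = ∑ i, if Adj j i then tau (k + 1) j i - tau k j i else 0)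
    (hz0 : ∀ j, 0 ≤ z 0 j) :
    (∀ k j, 0 ≤ z k j) ∧
    (∀ k j i, Adj j i → 0 ≤ tau k j i) ∧
    (∀ k j i, Adj j i → tau k j i ≤ sig (k + 1) j i) ∧
    (∀ k j i, Adj j i →
      0 ≤ (if x k j i then 0 else sig (k + 1) j i - tau k j i)) :=
  stmt_18_general Adj D x z sig tau hsig0 htau0 hsig htau hz hz0
end
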